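/- Let G₃ = ⟨g₁, g₂, g₃ ∣ g₂g₁ = g₁^{-1}g₂, g₃g₁ = g₁^{-1}g₃, g₃g₂ = g₁g₂g₃⟩. An automorphism ψ of G₃ is inner if and only if there exists a ∈ ℤ such that either ψ(g₁) = g₁, ψ(g₂) = g₁^{a} g₂, ψ(g₃) = g₁^{a} g₃, or ψ(g₁) = g₁^{-1}, ψ(g₂) = g₁^{a} g₂, ψ(g₃) = g₁^{a−1} g₃. -/

import Mathlib

/-- The relators `g₂g₁g₂⁻¹g₁`, `g₃g₁g₃⁻¹g₁`, `g₃g₂g₃⁻¹g₂⁻¹g₁⁻¹` presenting the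
group `⟨g₁, g₂, g₃ ∣ g₂g₁ = g₁⁻¹g₂, g₃g₁ = g₁⁻¹g₃, g₃g₂ = g₁g₂g₃⟩`. -/
def polyZRelsB1 : Set (FreeGroup (Fin 3)) :=
  {FreeGroup.of 1 * FreeGroup.of 0 * (FreeGroup.of 1)⁻¹ * FreeGroup.of 0,
   FreeGroup.of 2 * FreeGroup.of 0 * (FreeGroup.of 2)⁻¹ * FreeGroup.of 0,
   FreeGroup.of 2 * FreeGroup.of 1 * (FreeGroup.of 2)⁻¹ * (FreeGroup.of 1)⁻¹ * (FreeGroup.of 0)⁻¹}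

/-!
Write `a, b, c` for `g₁, g₂, g₃`. Conjugation by each generator sends `a ↦ a ^ e` with
`e = ±1`, `b ↦ a ^ n * b`, `c ↦ a ^ m * c`, and automorphisms of this shape compose by
`(e, n, m) * (e', n', m') = (e * e', n + e * n', m + e * m')`. The triples with `(e, m) = (1, n)`
or `(-1, n - 1)` are closed under this law and contain those of `a`, `b`, `c`, so every inner
automorphism has this shape. Conversely `c * b` acts by `(1, 1, 1)` and `b` by `(-1, 0, -1)`, so
`(c * b) ^ n` and `(c * b) ^ n * b` realise every such triple, and an automorphism of `G₃` is
determined by its values on the generators.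
-/

section MulAut

variable {G : Type*} [Group G] {φ ψ : MulAut G} {a x : G} {e e' k l : ℤ}

theorem MulAut.mul_apply_eq_zpow (hφ : φ a = a ^ e) (hψ : ψ a = a ^ e') :
    (φ * ψ) a = a ^ (e * e') := by
  rw [MulAut.mul_apply, hψ, map_zpow, hφ, zpow_mul]

theorem MulAut.mul_apply_eq_zpow_mul (hφa : φ a = a ^ e) (hφx : φ x = a ^ k * x)
    (hψx : ψ x = a ^ l * x) : (φ * ψ) x = a ^ (k + e * l) * x := by
  rw [MulAut.mul_apply, hψx, map_mul, map_zpow, hφa, hφx, ← zpow_mul, ← mul_assoc, ← zpow_add,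
    add_comm]

theorem MulAut.inv_apply_eq_zpow (hφ : φ a = a ^ e) (he : e * e = 1) : φ⁻¹ a = a ^ e := by
  rw [MulAut.inv_apply, MulEquiv.symm_apply_eq, map_zpow, hφ, ← zpow_mul, he, zpow_one]

theorem MulAut.inv_apply_eq_zpow_mul (hφa : φ a = a ^ e) (he : e * e = 1)
    (hφx : φ x = a ^ k * x) : φ⁻¹ x = a ^ (-(e * k)) * x := by
  rw [MulAut.inv_apply, MulEquiv.symm_apply_eq, map_mul, map_zpow, hφa, hφx, ← zpow_mul,
    ← mul_assoc, ← zpow_add, show e * -(e * k) + k = 0 by linear_combination (-k) * he,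
    zpow_zero, one_mul]

end MulAut

namespace PolyZB1

abbrev G₃ := PresentedGroup polyZRelsB1

def a : G₃ := PresentedGroup.of 0
def b : G₃ := PresentedGroup.of 1
def c : G₃ := PresentedGroup.of 2

theorem conj_b_a : b * a * b⁻¹ = a⁻¹ := by
  have h : b * a * b⁻¹ * a = 1 := PresentedGroup.one_of_mem (by simp [polyZRelsB1])
  rwa [mul_eq_one_iff_eq_inv] at h

theorem conj_c_a : c * a * c⁻¹ = a⁻¹ := by
  have h : c * a * c⁻¹ * a = 1 := PresentedGroup.one_of_mem (by simp [polyZRelsB1])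
  rwa [mul_eq_one_iff_eq_inv] at h

theorem conj_c_b : c * b * c⁻¹ = a * b := by
  have h : c * b * c⁻¹ * b⁻¹ * a⁻¹ = 1 := PresentedGroup.one_of_mem (by simp [polyZRelsB1])
  rwa [mul_eq_one_iff_eq_inv, inv_inv, mul_inv_eq_iff_eq_mul] at h

def ActsBy (φ : MulAut G₃) (e n m : ℤ) : Prop :=
  φ a = a ^ e ∧ φ b = a ^ n * b ∧ φ c = a ^ m * c

namespace ActsBy

variable {φ ψ : MulAut G₃} {e e' n n' m m' : ℤ}

theorem one : ActsBy 1 1 0 0 := by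
  simp [ActsBy]

theorem mul (hφ : ActsBy φ e n m) (hψ : ActsBy ψ e' n' m') :
    ActsBy (φ * ψ) (e * e') (n + e * n') (m + e * m') :=
  ⟨MulAut.mul_apply_eq_zpow hφ.1 hψ.1,
    MulAut.mul_apply_eq_zpow_mul hφ.1 hφ.2.1 hψ.2.1,
    MulAut.mul_apply_eq_zpow_mul hφ.1 hφ.2.2 hψ.2.2⟩

theorem inv (hφ : ActsBy φ e n m) (he : e * e = 1) : ActsBy φ⁻¹ e (-(e * n)) (-(e * m)) :=
  ⟨MulAut.inv_apply_eq_zpow hφ.1 he,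
    MulAut.inv_apply_eq_zpow_mul hφ.1 he hφ.2.1,
    MulAut.inv_apply_eq_zpow_mul hφ.1 he hφ.2.2⟩

theorem zpow (hφ : ActsBy φ 1 n n) (k : ℤ) : ActsBy (φ ^ k) 1 (k * n) (k * n) := by
  induction k using Int.induction_on with
  | zero => simpa using one
  | succ k ih =>
    rw [zpow_add_one]
    convert ih.mul hφ using 1 <;> ring
  | pred k ih =>
    rw [zpow_sub_one]
    convert ih.mul (hφ.inv (one_mul 1)) using 1 <;> ring

theorem unique (hφ : ActsBy φ e n m) (hψ : ActsBy ψ e n m) : φ = ψ := by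
  refine MulEquiv.toMonoidHom_injective (PresentedGroup.ext fun i => ?_)
  fin_cases i
  exacts [hφ.1.trans hψ.1.symm, hφ.2.1.trans hψ.2.1.symm, hφ.2.2.trans hψ.2.2.symm]

end ActsBy

def Admissible (e n m : ℤ) : Prop :=
  (e = 1 ∧ n = m) ∨ (e = -1 ∧ m = n - 1)

namespace Admissible

variable {e e' n n' m m' : ℤ}

theorem mul_self (h : Admissible e n m) : e * e = 1 := by
  rcases h with ⟨rfl, -⟩ | ⟨rfl, -⟩ <;> rfl

theorem mul (h : Admissible e n m) (h' : Admissible e' n' m') :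
    Admissible (e * e') (n + e * n') (m + e * m') := by
  unfold Admissible at *
  rcases h with ⟨rfl, rfl⟩ | ⟨rfl, rfl⟩ <;> rcases h' with ⟨rfl, rfl⟩ | ⟨rfl, rfl⟩ <;> omega

theorem inv (h : Admissible e n m) : Admissible e (-(e * n)) (-(e * m)) := by
  unfold Admissible at *
  rcases h with ⟨rfl, rfl⟩ | ⟨rfl, rfl⟩ <;> omega

end Admissible

def admissibleAut : Subgroup (MulAut G₃) where
  carrier := {φ | ∃ e n m, Admissible e n m ∧ ActsBy φ e n m}
  one_mem' := ⟨1, 0, 0, Or.inl ⟨rfl, rfl⟩, ActsBy.one⟩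
  mul_mem' := fun ⟨_, _, _, hadm, hφ⟩ ⟨_, _, _, hadm', hψ⟩ =>
    ⟨_, _, _, hadm.mul hadm', hφ.mul hψ⟩
  inv_mem' := fun ⟨_, _, _, hadm, hφ⟩ => ⟨_, _, _, hadm.inv, hφ.inv hadm.mul_self⟩

theorem mem_admissibleAut_iff {φ : MulAut G₃} :
    φ ∈ admissibleAut ↔ ∃ n : ℤ,
      (φ a = a ∧ φ b = a ^ n * b ∧ φ c = a ^ n * c) ∨
      (φ a = a⁻¹ ∧ φ b = a ^ n * b ∧ φ c = a ^ (n - 1) * c) := by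
  constructor
  · rintro ⟨e, n, m, ⟨rfl, rfl⟩ | ⟨rfl, rfl⟩, hφ⟩
    · exact ⟨n, Or.inl (by simpa [ActsBy] using hφ)⟩
    · exact ⟨n, Or.inr (by simpa [ActsBy] using hφ)⟩
  · rintro ⟨n, hφ | hφ⟩
    · exact ⟨1, n, n, Or.inl ⟨rfl, rfl⟩, by simpa [ActsBy] using hφ⟩
    · exact ⟨-1, n, n - 1, Or.inr ⟨rfl, rfl⟩, by simpa [ActsBy] using hφ⟩

theorem actsBy_conj_a : ActsBy (MulAut.conj a) 1 2 2 := by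
  refine ⟨by simp, ?_, ?_⟩ <;> simp only [MulAut.conj_apply]
  · calc a * b * a⁻¹ = a * (b * a * b⁻¹)⁻¹ * b := by group
      _ = a ^ (2 : ℤ) * b := by rw [conj_b_a, inv_inv, zpow_two]
  · calc a * c * a⁻¹ = a * (c * a * c⁻¹)⁻¹ * c := by group
      _ = a ^ (2 : ℤ) * c := by rw [conj_c_a, inv_inv, zpow_two]

theorem actsBy_conj_b : ActsBy (MulAut.conj b) (-1) 0 (-1) := by
  refine ⟨?_, by simp, ?_⟩ <;> simp only [MulAut.conj_apply]
  · rw [conj_b_a, zpow_neg_one]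
  · calc b * c * b⁻¹ = (c * b * c⁻¹ * b⁻¹)⁻¹ * c := by group
      _ = a ^ (-1 : ℤ) * c := by rw [conj_c_b]; group

theorem actsBy_conj_c : ActsBy (MulAut.conj c) (-1) 1 0 := by
  refine ⟨?_, ?_, by simp⟩ <;> simp only [MulAut.conj_apply]
  · rw [conj_c_a, zpow_neg_one]
  · rw [conj_c_b, zpow_one]

theorem conj_mem_admissibleAut (h : G₃) : MulAut.conj h ∈ admissibleAut := by
  refine PresentedGroup.generated_by _ (admissibleAut.comap MulAut.conj) (fun i => ?_) h
  fin_cases i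
  exacts [⟨_, _, _, Or.inl ⟨rfl, rfl⟩, actsBy_conj_a⟩, ⟨_, _, _, Or.inr ⟨rfl, rfl⟩, actsBy_conj_b⟩,
    ⟨_, _, _, Or.inr ⟨rfl, rfl⟩, actsBy_conj_c⟩]

theorem exists_actsBy_conj {e n m : ℤ} (hadm : Admissible e n m) :
    ∃ h : G₃, ActsBy (MulAut.conj h) e n m := by
  have hcb : ActsBy (MulAut.conj (c * b)) 1 1 1 := by
    rw [map_mul]
    convert actsBy_conj_c.mul actsBy_conj_b using 1 <;> norm_num
  rcases hadm with ⟨rfl, rfl⟩ | ⟨rfl, rfl⟩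
  · exact ⟨(c * b) ^ n, by simpa [map_zpow] using hcb.zpow n⟩
  · refine ⟨(c * b) ^ n * b, ?_⟩
    rw [map_mul, map_zpow]
    convert (hcb.zpow n).mul actsBy_conj_b using 1 <;> ring

theorem range_conj_eq_admissibleAut : (MulAut.conj : G₃ →* MulAut G₃).range = admissibleAut := by
  refine le_antisymm (fun _ ⟨h, hφ⟩ => hφ ▸ conj_mem_admissibleAut h) ?_
  rintro φ ⟨e, n, m, hadm, hφ⟩
  obtain ⟨h, hh⟩ := exists_actsBy_conj hadm
  exact ⟨h, hh.unique hφ⟩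

end PolyZB1

/-- In `G₃ = ⟨g₁, g₂, g₃ ∣ g₂g₁ = g₁⁻¹g₂, g₃g₁ = g₁⁻¹g₃, g₃g₂ = g₁g₂g₃⟩`, an
automorphism `ψ` is inner if and only if there exists `a ∈ ℤ` such that either
`ψ g₁ = g₁`, `ψ g₂ = g₁^a g₂`, `ψ g₃ = g₁^a g₃`, or `ψ g₁ = g₁⁻¹`,
`ψ g₂ = g₁^a g₂`, `ψ g₃ = g₁^(a-1) g₃`. -/
theorem polyZ_b1_inner_characterization
    (ψ : PresentedGroup polyZRelsB1 ≃* PresentedGroup polyZRelsB1) :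
    letI G₃ := PresentedGroup polyZRelsB1
    letI g₁ : G₃ := PresentedGroup.of 0
    letI g₂ : G₃ := PresentedGroup.of 1
    letI g₃ : G₃ := PresentedGroup.of 2
    (∃ h : G₃, ∀ x : G₃, ψ x = h * x * h⁻¹) ↔
      ∃ a : ℤ,
        (ψ g₁ = g₁ ∧ ψ g₂ = g₁ ^ a * g₂ ∧ ψ g₃ = g₁ ^ a * g₃) ∨
        (ψ g₁ = g₁⁻¹ ∧ ψ g₂ = g₁ ^ a * g₂ ∧ ψ g₃ = g₁ ^ (a - 1) * g₃) := by
  open PolyZB1 in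
  show (∃ h : G₃, ∀ x, ψ x = h * x * h⁻¹) ↔ ∃ n : ℤ,
      (ψ a = a ∧ ψ b = a ^ n * b ∧ ψ c = a ^ n * c) ∨
      (ψ a = a⁻¹ ∧ ψ b = a ^ n * b ∧ ψ c = a ^ (n - 1) * c)
  rw [← PolyZB1.mem_admissibleAut_iff, ← PolyZB1.range_conj_eq_admissibleAut]
  exact exists_congr fun h => by rw [eq_comm, MulEquiv.ext_iff]; rfl
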